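/- Multi-current marginal integral fluctuation relation in operator form (Theorem 'ift2', λ({Q_μ}) = 0): the tilted operator evaluated at the effective affinities annihilates the stalling state: (M Q) *ᵥ p = 0; in particular 0 is an eigenvalue of M Q with strictly positive eigenvector p. -/
import Mathlib


open Matrix

/-- Multi-current marginal integral fluctuation relation in operator form
(Theorem "ift2"): the tilted operator at the effective affinities annihilates
the stalling state. -/
theorem multi_edge_marginal_IFR {n m : ℕ}
    (W Whid : Matrix (Fin n) (Fin n) ℝ)
    (hW1 : ∀ i j, i ≠ j → 0 ≤ W i j)
    (hW2 : ∀ j, ∑ i, W i j = 0)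
    (ei ej : Fin m → Fin n)
    (hij : ∀ μ, ei μ ≠ ej μ)
    (hdist : ∀ μ ν, μ ≠ ν → ({ei μ, ej μ} : Finset (Fin n)) ≠ {ei ν, ej ν})
    (hpos1 : ∀ μ, 0 < W (ei μ) (ej μ))
    (hpos2 : ∀ μ, 0 < W (ej μ) (ei μ))
    (hH1 : ∀ μ, Whid (ei μ) (ej μ) = 0)
    (hH2 : ∀ μ, Whid (ej μ) (ei μ) = 0)
    (hH3 : ∀ i, Whid i i = W i i
        + ∑ μ ∈ Finset.univ.filter (fun μ => ej μ = i), W (ei μ) (ej μ)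
        + ∑ μ ∈ Finset.univ.filter (fun μ => ei μ = i), W (ej μ) (ei μ))
    (hH4 : ∀ i j, i ≠ j →
      (∀ μ, ¬(i = ei μ ∧ j = ej μ) ∧ ¬(i = ej μ ∧ j = ei μ)) → Whid i j = W i j)
    (p : Fin n → ℝ) (hp1 : ∀ i, 0 < p i) (hp2 : ∑ i, p i = 1)
    (hp3 : Whid *ᵥ p = 0)
    (Q : Fin m → ℝ)
    (hQ : ∀ μ, Q μ = Real.log (W (ei μ) (ej μ) * p (ej μ) / (W (ej μ) (ei μ) * p (ei μ))))
    (M : (Fin m → ℝ) → Matrix (Fin n) (Fin n) ℝ)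
    (hM1 : ∀ q μ, M q (ei μ) (ej μ) = W (ei μ) (ej μ) * Real.exp (-q μ))
    (hM2 : ∀ q μ, M q (ej μ) (ei μ) = W (ej μ) (ei μ) * Real.exp (q μ))
    (hM3 : ∀ q i j, (∀ μ, ¬(i = ei μ ∧ j = ej μ) ∧ ¬(i = ej μ ∧ j = ei μ)) → M q i j = W i j) :
    M Q *ᵥ p = 0 := by
  -- exp of the affinity
  have hexpQ : ∀ μ, Real.exp (Q μ)
      = W (ei μ) (ej μ) * p (ej μ) / (W (ej μ) (ei μ) * p (ei μ)) := by
    intro μ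
    rw [hQ μ, Real.exp_log]
    exact div_pos (mul_pos (hpos1 μ) (hp1 _)) (mul_pos (hpos2 μ) (hp1 _))
  have key1 : ∀ μ, W (ei μ) (ej μ) * Real.exp (-Q μ) * p (ej μ)
      = W (ej μ) (ei μ) * p (ei μ) := by
    intro μ
    rw [Real.exp_neg, hexpQ μ]
    have h1 := (hpos1 μ).ne'
    have h2 := (hpos2 μ).ne'
    have h3 := (hp1 (ei μ)).ne'
    have h4 := (hp1 (ej μ)).ne'
    field_simp
  have key2 : ∀ μ, W (ej μ) (ei μ) * Real.exp (Q μ) * p (ei μ)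
      = W (ei μ) (ej μ) * p (ej μ) := by
    intro μ
    rw [hexpQ μ]
    have h2 := (hpos2 μ).ne'
    have h3 := (hp1 (ei μ)).ne'
    field_simp
  -- uniqueness of edges
  have huniq : ∀ μ ν, ei μ = ei ν → ej μ = ej ν → μ = ν := by
    intro μ ν h1 h2
    by_contra h
    exact hdist μ ν h (by rw [h1, h2])
  have hcross : ∀ μ ν, ei μ = ej ν → ej μ = ei ν → False := by
    intro μ ν h1 h2
    by_cases h : μ = ν
    · subst h; exact hij μ h1
    · exact hdist μ ν h (by rw [h1, h2, Finset.pair_comm])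
  funext i
  simp only [Matrix.mulVec, dotProduct, Pi.zero_apply]
  -- the correction terms
  set F : Fin m → Fin n → ℝ := fun μ j =>
    (if ei μ = i ∧ ej μ = j then W (ej μ) (ei μ) * p i else 0)
    + (if ej μ = i ∧ ei μ = j then W (ei μ) (ej μ) * p i else 0) with hF
  have stepA : ∀ j, j ≠ i → M Q i j * p j = Whid i j * p j + ∑ μ, F μ j := by
    intro j hji
    by_cases h1 : ∃ μ, ei μ = i ∧ ej μ = j
    · obtain ⟨μ0, hμ1, hμ2⟩ := h1
      have hsum : ∑ μ, F μ j = W (ej μ0) (ei μ0) * p i := by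
        rw [Finset.sum_eq_single μ0]
        · simp only [hF]
          rw [if_pos ⟨hμ1, hμ2⟩, if_neg]
          · ring
          · rintro ⟨ha, hb⟩
            exact hij μ0 (hμ1.trans ha.symm)
        · intro ν _ hν
          simp only [hF]
          rw [if_neg, if_neg]
          · ring
          · rintro ⟨ha, hb⟩
            exact hcross μ0 ν (hμ1.trans ha.symm) (hμ2.trans hb.symm)
          · rintro ⟨ha, hb⟩
            exact hν (huniq ν μ0 (ha.trans hμ1.symm) (hb.trans hμ2.symm))
        · simp
      rw [hsum, ← hμ1, ← hμ2, hH1 μ0, hM1 Q μ0, key1 μ0]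
      ring
    · by_cases h2 : ∃ μ, ej μ = i ∧ ei μ = j
      · obtain ⟨μ0, hμ1, hμ2⟩ := h2
        have hsum : ∑ μ, F μ j = W (ei μ0) (ej μ0) * p i := by
          rw [Finset.sum_eq_single μ0]
          · simp only [hF]
            rw [if_neg, if_pos ⟨hμ1, hμ2⟩]
            · ring
            · rintro ⟨ha, hb⟩
              exact hij μ0 (ha.trans hμ1.symm)
          · intro ν _ hν
            simp only [hF]
            rw [if_neg, if_neg]
            · ring
            · rintro ⟨ha, hb⟩
              exact hν (huniq ν μ0 (hb.trans hμ2.symm) (ha.trans hμ1.symm))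
            · rintro ⟨ha, hb⟩
              exact hcross ν μ0 (ha.trans hμ1.symm) (hb.trans hμ2.symm)
          · simp
        rw [hsum, ← hμ1, ← hμ2, hH2 μ0, hM2 Q μ0, key2 μ0]
        ring
      · push_neg at h1 h2
        have hcond : ∀ μ, ¬(i = ei μ ∧ j = ej μ) ∧ ¬(i = ej μ ∧ j = ei μ) := by
          intro μ
          constructor
          · rintro ⟨ha, hb⟩; exact (h1 μ ha.symm) hb.symm
          · rintro ⟨ha, hb⟩; exact (h2 μ ha.symm) hb.symm
        have hsum : ∑ μ, F μ j = 0 := by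
          apply Finset.sum_eq_zero
          intro μ _
          simp only [hF]
          rw [if_neg, if_neg]
          · ring
          · rintro ⟨ha, hb⟩; exact (h2 μ ha) hb
          · rintro ⟨ha, hb⟩; exact (h1 μ ha) hb
        rw [hsum, hM3 Q i j hcond, hH4 i j (Ne.symm hji) hcond]
        ring
  have hdiag : M Q i i = W i i := by
    apply hM3
    intro μ
    constructor
    · rintro ⟨ha, hb⟩; exact hij μ (ha.symm.trans hb)
    · rintro ⟨ha, hb⟩; exact hij μ (hb.symm.trans ha)
  have hrow : ∑ j, Whid i j * p j = 0 := by
    have := congrFun hp3 i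
    simpa [Matrix.mulVec, dotProduct] using this
  -- split off the diagonal
  rw [← Finset.add_sum_erase _ _ (Finset.mem_univ i)]
  rw [Finset.sum_congr rfl (fun j hj => stepA j (Finset.ne_of_mem_erase hj))]
  rw [Finset.sum_add_distrib]
  have hrow' : ∑ j ∈ Finset.univ.erase i, Whid i j * p j = - (Whid i i * p i) := by
    have h := Finset.add_sum_erase Finset.univ (fun j => Whid i j * p j) (Finset.mem_univ i)
    simp only [hrow] at h
    linarith
  have hswap : ∑ j ∈ Finset.univ.erase i, ∑ μ, F μ j
      = (∑ μ ∈ Finset.univ.filter (fun μ => ej μ = i), W (ei μ) (ej μ)) * p i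
      + (∑ μ ∈ Finset.univ.filter (fun μ => ei μ = i), W (ej μ) (ei μ)) * p i := by
    rw [Finset.sum_comm]
    have hinner : ∀ μ, ∑ j ∈ Finset.univ.erase i, F μ j
        = (if ei μ = i then W (ej μ) (ei μ) * p i else 0)
        + (if ej μ = i then W (ei μ) (ej μ) * p i else 0) := by
      intro μ
      have hFi : F μ i = 0 := by
        simp only [hF]
        rw [if_neg, if_neg]
        · ring
        · rintro ⟨ha, hb⟩; exact hij μ (hb.trans ha.symm)
        · rintro ⟨ha, hb⟩; exact hij μ (ha.trans hb.symm)
      rw [Finset.sum_erase _ hFi]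
      simp only [hF, Finset.sum_add_distrib]
      congr 1
      · by_cases h : ei μ = i
        · simp [h, Finset.sum_ite_eq]
        · simp [h]
      · by_cases h : ej μ = i
        · simp [h, Finset.sum_ite_eq]
        · simp [h]
    rw [Finset.sum_congr rfl (fun μ _ => hinner μ), Finset.sum_add_distrib]
    rw [← Finset.sum_filter, ← Finset.sum_filter, ← Finset.sum_mul, ← Finset.sum_mul]
    ring
  rw [hrow', hswap, hdiag, hH3 i]
  ring
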